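/- arXiv:1110.1151 — 3 statements merged into one kernel-verified Lean document; each statement's English description precedes it below -/
import Mathlib

section
/- Let k > 0 and let x : ℝ → ℝ be differentiable with x'(t) = x(t)(1 - k x(t)²) for all t ≥ 0. If x(0) < 0, then x(t) converges to -√(1/k) as t → ∞. -/
/-!
A solution starting below zero stays below zero, since `x` solves the linear equation
`y' = (1 - k x²) y` and hence `x t = x 0 * exp (∫ (1 - k x²))`. Away from zero the Bernoulli
substitution `w = x⁻²` linearizes the system to `w' = 2 (k - w)`, so
`(x t)⁻² = k + ((x 0)⁻² - k) e^{-2t} → k`, and taking the negative root gives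
`x t → -√(1/k)`.
-/

open Filter Topology

theorem eq_mul_exp_sub_of_hasDerivAt_mul {y c C : ℝ → ℝ}
    (hC : ∀ t, 0 ≤ t → HasDerivAt C (c t) t)
    (hy : ∀ t, 0 ≤ t → HasDerivAt y (c t * y t) t) {t : ℝ} (ht : 0 ≤ t) :
    y t = y 0 * Real.exp (C t - C 0) := by
  set u : ℝ → ℝ := fun s => y s * Real.exp (-C s)
  have hu : ∀ s, 0 ≤ s → HasDerivAt u 0 s := fun s hs =>
    ((hy s hs).mul (hC s hs).neg.exp).congr_deriv (by simp only [Pi.neg_apply]; ring)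
  have hu_const : u t = u 0 :=
    constant_of_has_deriv_right_zero
      (fun s hs => (hu s hs.1).continuousAt.continuousWithinAt)
      (fun s hs => (hu s hs.1).hasDerivWithinAt) t ⟨ht, le_rfl⟩
  calc y t = u t * Real.exp (C t) := by
        rw [mul_assoc, ← Real.exp_add, neg_add_cancel, Real.exp_zero, mul_one]
    _ = u 0 * Real.exp (C t) := by rw [hu_const]
    _ = y 0 * Real.exp (C t - C 0) := by rw [mul_assoc, ← Real.exp_add, neg_add_eq_sub]

theorem eq_mul_exp_integral_of_hasDerivAt_mul {y c : ℝ → ℝ} (hc : Continuous c)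
    (hy : ∀ t, 0 ≤ t → HasDerivAt y (c t * y t) t) {t : ℝ} (ht : 0 ≤ t) :
    y t = y 0 * Real.exp (∫ s in (0 : ℝ)..t, c s) := by
  simpa using eq_mul_exp_sub_of_hasDerivAt_mul
    (fun s _ => (hc.integral_hasStrictDerivAt 0 s).hasDerivAt) hy ht

section

variable {k : ℝ} {x : ℝ → ℝ}
  (hx : ∀ t, 0 ≤ t → HasDerivAt x (x t * (1 - k * x t ^ 2)) t)
include hx

theorem neg_of_hasDerivAt_mul_one_sub_sq (hxc : Continuous x) (h0 : x 0 < 0) {t : ℝ}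
    (ht : 0 ≤ t) : x t < 0 := by
  have hlin : ∀ s, 0 ≤ s → HasDerivAt x ((1 - k * x s ^ 2) * x s) s := fun s hs => by
    simpa only [mul_comm] using hx s hs
  rw [eq_mul_exp_integral_of_hasDerivAt_mul (by fun_prop) hlin ht]
  exact mul_neg_of_neg_of_pos h0 (Real.exp_pos _)

theorem inv_sq_eq_of_hasDerivAt_mul_one_sub_sq (hx0 : ∀ t, 0 ≤ t → x t ≠ 0) {t : ℝ}
    (ht : 0 ≤ t) : (x t ^ 2)⁻¹ = k + ((x 0 ^ 2)⁻¹ - k) * Real.exp (-2 * t) := by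
  have hw : ∀ s, 0 ≤ s →
      HasDerivAt (fun s => (x s ^ 2)⁻¹ - k) (-2 * ((x s ^ 2)⁻¹ - k)) s := fun s hs =>
    ((((hx s hs).pow 2).inv (pow_ne_zero 2 (hx0 s hs))).sub_const k).congr_deriv (by
      have hxs := hx0 s hs
      simp only [Nat.cast_ofNat, Nat.add_one_sub_one, pow_one, Pi.pow_apply]
      field_simp)
  have hsol := eq_mul_exp_sub_of_hasDerivAt_mul (C := fun s => -2 * s)
    (fun s _ => by simpa using (hasDerivAt_id s).const_mul (-2)) hw ht
  simp only [mul_zero, sub_zero] at hsol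
  linarith

end

/-- For `k > 0`, every solution of `ẋ = x (1 - k x²)` with negative initial
condition converges to the ancillary stable equilibrium `-√(1/k)`. -/
theorem stmt3 (k : ℝ) (hk : 0 < k) (x : ℝ → ℝ)
    (hdiff : Differentiable ℝ x)
    (hode : ∀ t : ℝ, 0 ≤ t → deriv x t = x t * (1 - k * (x t) ^ 2))
    (h0 : x 0 < 0) :
    Filter.Tendsto x Filter.atTop (nhds (-Real.sqrt (1 / k))) := by
  have hx : ∀ t, 0 ≤ t → HasDerivAt x (x t * (1 - k * x t ^ 2)) t := fun t ht =>
    hode t ht ▸ (hdiff t).hasDerivAt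
  have hneg : ∀ t, 0 ≤ t → x t < 0 := fun t ht =>
    neg_of_hasDerivAt_mul_one_sub_sq hx hdiff.continuous h0 ht
  have hw : Tendsto (fun t => (x t ^ 2)⁻¹) atTop (𝓝 k) := by
    have hexp : Tendsto (fun t : ℝ => Real.exp (-2 * t)) atTop (𝓝 0) :=
      Real.tendsto_exp_atBot.comp (tendsto_id.const_mul_atTop_of_neg (by norm_num))
    have := (hexp.const_mul ((x 0 ^ 2)⁻¹ - k)).const_add k
    rw [mul_zero, add_zero] at this
    refine this.congr' ?_
    filter_upwards [eventually_ge_atTop 0] with t ht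
    exact (inv_sq_eq_of_hasDerivAt_mul_one_sub_sq hx (fun s hs => (hneg s hs).ne) ht).symm
  have hroot : ContinuousAt (fun w : ℝ => -Real.sqrt w⁻¹) k :=
    (Real.continuous_sqrt.continuousAt.comp (continuousAt_inv₀ hk.ne')).neg
  rw [one_div]
  refine (hroot.tendsto.comp hw).congr' ?_
  filter_upwards [eventually_ge_atTop 0] with t ht
  simp [Real.sqrt_sq_eq_abs, abs_of_neg (hneg t ht)]
end

section
/- Let n ≥ 2 and let δ : (ℝ²)ⁿ → ℝ^{n(n-1)/2} be the distance function whose component indexed by a pair i < j is (1/2)‖x_i - x_j‖². Then for every x ∈ (ℝ²)ⁿ, the rank of the derivative of δ at x (the dimension of the range of the Fréchet derivative) is at most 2n - 3. -/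
/-!
The derivative of `δ` at `x` is the rigidity map `v ↦ (⟪x i - x j, v i - v j⟫)_{i<j}`. Its kernel
contains the infinitesimal rigid motions `v i = a + c • J (x i)`, where `a` is a translation and `J`
is any skew map (here the rotation by a right angle), because `⟪u, J u⟫ = 0`. As soon as two points
differ, these motions form a subspace of dimension `2 + 1 = 3`, and rank-nullity bounds the rank by
`2n - 3`. If all points coincide, the derivative vanishes.
-/

noncomputable def distFun (n : ℕ) (x : Fin n → EuclideanSpace ℝ (Fin 2)) :
    {p : Fin n × Fin n // p.1 < p.2} → ℝ :=
  fun p => (1 / 2) * ‖x p.1.1 - x p.1.2‖ ^ 2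

open scoped RealInnerProductSpace

section RigidityMap

variable {E : Type*} [NormedAddCommGroup E] [InnerProductSpace ℝ E] {n : ℕ}

noncomputable def rigidityMap (x : Fin n → E) :
    (Fin n → E) →L[ℝ] ({p : Fin n × Fin n // p.1 < p.2} → ℝ) :=
  ContinuousLinearMap.pi fun p => (innerSL ℝ (x p.1.1 - x p.1.2)).comp
    (ContinuousLinearMap.proj (R := ℝ) (φ := fun _ => E) p.1.1 -
      ContinuousLinearMap.proj p.1.2)

@[simp]
theorem rigidityMap_apply (x v : Fin n → E) (p : {p : Fin n × Fin n // p.1 < p.2}) :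
    rigidityMap x v p = ⟪x p.1.1 - x p.1.2, v p.1.1 - v p.1.2⟫ := by
  simp only [rigidityMap, ContinuousLinearMap.pi_apply, ContinuousLinearMap.comp_apply,
    sub_apply, ContinuousLinearMap.proj_apply, innerSL_apply_apply]

theorem rigidityMap_eq_zero_of_forall_eq {x : Fin n → E} (hx : ∀ i j, x i = x j) :
    rigidityMap x = 0 := by
  ext v p
  simp [hx p.1.1 p.1.2]

noncomputable def infinitesimalMotion (J : E →ₗ[ℝ] E) (x : Fin n → E) :
    (E × ℝ) →ₗ[ℝ] (Fin n → E) :=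
  LinearMap.pi fun i => LinearMap.fst ℝ E ℝ + (LinearMap.snd ℝ E ℝ).smulRight (J (x i))

@[simp]
theorem infinitesimalMotion_apply (J : E →ₗ[ℝ] E) (x : Fin n → E) (m : E × ℝ) (i : Fin n) :
    infinitesimalMotion J x m i = m.1 + m.2 • J (x i) :=
  rfl

theorem rigidityMap_infinitesimalMotion {J : E →ₗ[ℝ] E} (hJ : ∀ v, ⟪v, J v⟫ = 0)
    (x : Fin n → E) (m : E × ℝ) : rigidityMap x (infinitesimalMotion J x m) = 0 := by
  ext p
  simp only [rigidityMap_apply, infinitesimalMotion_apply, Pi.zero_apply,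
    add_sub_add_left_eq_sub, ← smul_sub, ← map_sub, inner_smul_right, hJ, mul_zero]

theorem infinitesimalMotion_injective {J : E →ₗ[ℝ] E} (hJ : Function.Injective J)
    {x : Fin n → E} {i j : Fin n} (hij : x i ≠ x j) :
    Function.Injective (infinitesimalMotion J x) := by
  rw [← LinearMap.ker_eq_bot, LinearMap.ker_eq_bot']
  rintro ⟨a, c⟩ hm
  have hi := congrFun hm i
  have hj := congrFun hm j
  simp only [infinitesimalMotion_apply, Pi.zero_apply] at hi hj
  have hc : c = 0 := by
    have hdiff : c • J (x i - x j) = 0 := by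
      rw [map_sub, smul_sub, eq_neg_of_add_eq_zero_right hi, eq_neg_of_add_eq_zero_right hj,
        sub_self]
    rcases smul_eq_zero.1 hdiff with hc | hJx
    · exact hc
    · exact absurd (sub_eq_zero.1 (hJ (hJx.trans (map_zero J).symm))) hij
  simp_all

theorem finrank_range_rigidityMap_le [FiniteDimensional ℝ E] {J : E →ₗ[ℝ] E}
    (hJ_skew : ∀ v, ⟪v, J v⟫ = 0) (hJ_inj : Function.Injective J)
    {x : Fin n → E} {i j : Fin n} (hij : x i ≠ x j) :
    Module.finrank ℝ (LinearMap.range (rigidityMap x).toLinearMap) ≤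
      n * Module.finrank ℝ E - (Module.finrank ℝ E + 1) := by
  have hle : LinearMap.range (infinitesimalMotion J x) ≤
      LinearMap.ker (rigidityMap x).toLinearMap := by
    rintro _ ⟨m, rfl⟩
    exact rigidityMap_infinitesimalMotion hJ_skew x m
  have hker : Module.finrank ℝ E + 1 ≤
      Module.finrank ℝ (LinearMap.ker (rigidityMap x).toLinearMap) :=
    calc Module.finrank ℝ E + 1 = Module.finrank ℝ (E × ℝ) := by simp
      _ = Module.finrank ℝ (LinearMap.range (infinitesimalMotion J x)) :=
        (LinearMap.finrank_range_of_inj (infinitesimalMotion_injective hJ_inj hij)).symm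
      _ ≤ _ := Submodule.finrank_mono hle
  have hrank := LinearMap.finrank_range_add_finrank_ker (rigidityMap x).toLinearMap
  rw [Module.finrank_pi_fintype, Finset.sum_const, Finset.card_univ, Fintype.card_fin,
    smul_eq_mul] at hrank
  omega

end RigidityMap

theorem hasFDerivAt_distFun {n : ℕ} (x : Fin n → EuclideanSpace ℝ (Fin 2)) :
    HasFDerivAt (distFun n) (rigidityMap x) x := by
  refine hasFDerivAt_pi.2 fun p => ?_
  have hsub : HasFDerivAt (fun y : Fin n → EuclideanSpace ℝ (Fin 2) => y p.1.1 - y p.1.2)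
      (ContinuousLinearMap.proj p.1.1 - ContinuousLinearMap.proj p.1.2) x :=
    (hasFDerivAt_apply (𝕜 := ℝ) p.1.1 x).fun_sub (hasFDerivAt_apply p.1.2 x)
  convert hsub.norm_sq.const_smul (1 / 2 : ℝ) using 1
  · ext y
    simp [distFun]
  · ext v
    simp

theorem stmt11_general (n : ℕ) (x : Fin n → EuclideanSpace ℝ (Fin 2)) :
    Module.finrank ℝ (LinearMap.range ((fderiv ℝ (distFun n) x) : (Fin n → EuclideanSpace ℝ (Fin 2)) →ₗ[ℝ] ({p : Fin n × Fin n // p.1 < p.2} → ℝ))) ≤ 2 * n - 3 := by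
  rw [(hasFDerivAt_distFun x).fderiv]
  by_cases hx : ∀ i j, x i = x j
  · rw [rigidityMap_eq_zero_of_forall_eq hx, ContinuousLinearMap.toLinearMap_zero,
      LinearMap.range_zero, finrank_bot]
    exact Nat.zero_le _
  obtain ⟨i, j, hij⟩ : ∃ i j, x i ≠ x j := by simpa using hx
  have : Fact (Module.finrank ℝ (EuclideanSpace ℝ (Fin 2)) = 2) := ⟨finrank_euclideanSpace_fin⟩
  let J := (EuclideanSpace.basisFun (Fin 2) ℝ).toBasis.orientation.rightAngleRotation
  have hJ_skew (v : EuclideanSpace ℝ (Fin 2)) : ⟪v, J v⟫ = 0 :=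
    (real_inner_comm _ _).trans (Orientation.inner_rightAngleRotation_self _ v)
  have hrank := finrank_range_rigidityMap_le (J := J.toLinearMap) hJ_skew J.injective hij
  rw [finrank_euclideanSpace_fin] at hrank
  omega

/-- For `n ≥ 2`, the rank of the derivative of the distance function at any
configuration (the dimension of the range of its Fréchet derivative) is at most
`2n - 3`. -/
theorem stmt11 (n : ℕ) (hn : 2 ≤ n) (x : Fin n → EuclideanSpace ℝ (Fin 2)) :
    Module.finrank ℝ (LinearMap.range ((fderiv ℝ (distFun n) x) : (Fin n → EuclideanSpace ℝ (Fin 2)) →ₗ[ℝ] ({p : Fin n × Fin n // p.1 < p.2} → ℝ))) ≤ 2 * n - 3 :=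
  stmt11_general n x
end

section
/- Let f : ℝ → ℝ be continuously differentiable. Then the image under f of the set of critical points, f '' {x ∈ ℝ : f'(x) = 0}, is a Lebesgue-null subset of ℝ. -/
open MeasureTheory

theorem Real.volume_image_eq_zero_of_hasDerivWithinAt_zero {f : ℝ → ℝ} {s : Set ℝ}
    (hf : ∀ x ∈ s, HasDerivWithinAt f 0 s x) : volume (f '' s) = 0 :=
  addHaar_image_eq_zero_of_det_fderivWithin_eq_zero volume (fun x hx => (hf x hx).hasFDerivWithinAt)
    fun _ _ => ContinuousLinearMap.det_toSpanSingleton 0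

/-- One-dimensional Sard theorem: the set of critical values of a `C¹` function
`f : ℝ → ℝ` is Lebesgue-null. -/
theorem stmt13 (f : ℝ → ℝ) (hf : ContDiff ℝ 1 f) :
    MeasureTheory.volume (f '' {x : ℝ | deriv f x = 0}) = 0 :=
  Real.volume_image_eq_zero_of_hasDerivWithinAt_zero fun x hx =>
    (hx ▸ (hf.differentiable one_ne_zero x).hasDerivAt).hasDerivWithinAt
end
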